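/- arXiv:2503.02566 — 5 statements merged into one kernel-verified Lean document; each statement's English description precedes it below -/
import Mathlib

section
/- Let I be an MA 1 instance that admits at least one MA 1-feasible hub set, and for each task t = (b,b') ∈ τ choose a pair (h_t, h'_t) valid for t attaining the minimum m(t) of cost({h,h'}) over all pairs valid for t. Then the set S = ∪_{t∈τ} {h_t, h'_t} is MA 1-feasible, and cost(S) ≤ Σ_{t∈τ} m(t) ≤ |τ| · OPT ≤ |B|² · OPT. -/
/-!
STATEMENT 1: In an MA 1 instance admitting a feasible hub set, choosing for each task a
cheapest valid hub pair and opening all chosen hubs yields an MA 1-feasible set `S` with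
`cost S ≤ Σ_{t∈τ} m t ≤ |τ| · OPT ≤ |B|² · OPT`.
-/

/-- Length of the tour `b → h → h' → b'` with discount factor `α`. -/
def tourLen {B H : Type*} (d : (B ⊕ H) → (B ⊕ H) → ℝ) (α : ℝ)
    (b : B) (h h' : H) (b' : B) : ℝ :=
  d (Sum.inl b) (Sum.inr h) + α * d (Sum.inr h) (Sum.inr h') + d (Sum.inr h') (Sum.inl b')

/-- A hub set `S` is MA 1-feasible if every task admits a tour through one or two
open hubs of length at most `φ`. -/
def MA1Feasible {B H : Type*} (d : (B ⊕ H) → (B ⊕ H) → ℝ) (α φ : ℝ)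
    (τ : Finset (B × B)) (S : Finset H) : Prop :=
  ∀ t ∈ τ, ∃ h ∈ S, ∃ h' ∈ S, tourLen d α t.1 h h' t.2 ≤ φ

/-- Total opening cost of a hub set. -/
def cost {H : Type*} (c : H → ℝ) (S : Finset H) : ℝ := ∑ h ∈ S, c h

lemma cost_biUnion_le {H ι : Type*} [DecidableEq H] (c : H → ℝ) (hc : ∀ h, 0 ≤ c h)
    (s : Finset ι) (f : ι → Finset H) :
    cost c (s.biUnion f) ≤ ∑ i ∈ s, cost c (f i) := by
  classical
  induction s using Finset.induction_on with
  | empty => simp [cost]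
  | @insert a s hx ih =>
    rw [Finset.biUnion_insert, Finset.sum_insert hx]
    have h1 : cost c (f a ∪ s.biUnion f) ≤ cost c (f a) + cost c (s.biUnion f) := by
      have := Finset.sum_union_inter (s₁ := f a) (s₂ := s.biUnion f) (f := c)
      have h2 : 0 ≤ ∑ h ∈ f a ∩ s.biUnion f, c h :=
        Finset.sum_nonneg fun h _ => hc h
      unfold cost; linarith
    exact h1.trans (by linarith)

theorem stmt1 {B H : Type*} [Fintype B] [Fintype H] [DecidableEq H]
    (c : H → ℝ) (hc : ∀ h, 0 ≤ c h)
    (d : (B ⊕ H) → (B ⊕ H) → ℝ)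
    (hd0 : ∀ x, d x x = 0) (hdsym : ∀ x y, d x y = d y x)
    (τ : Finset (B × B)) (α : ℝ) (hα : 0 ≤ α) (φ : ℝ)
    (hfeas : ∃ S : Finset H, MA1Feasible d α φ τ S)
    (m : B × B → ℝ)
    (hm : ∀ t ∈ τ, IsLeast
      {x : ℝ | ∃ h h' : H, tourLen d α t.1 h h' t.2 ≤ φ ∧ x = cost c {h, h'}} (m t))
    (p : B × B → H × H)
    (hpvalid : ∀ t ∈ τ, tourLen d α t.1 (p t).1 (p t).2 t.2 ≤ φ)
    (hpmin : ∀ t ∈ τ, cost c {(p t).1, (p t).2} = m t)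
    (OPT : ℝ)
    (hOPT : IsLeast {x : ℝ | ∃ S : Finset H, MA1Feasible d α φ τ S ∧ x = cost c S} OPT) :
    MA1Feasible d α φ τ (τ.biUnion fun t => {(p t).1, (p t).2}) ∧
      cost c (τ.biUnion fun t => {(p t).1, (p t).2}) ≤ ∑ t ∈ τ, m t ∧
      ∑ t ∈ τ, m t ≤ (τ.card : ℝ) * OPT ∧
      (τ.card : ℝ) * OPT ≤ ((Fintype.card B : ℝ)) ^ 2 * OPT := by
  obtain ⟨S₀, hS₀feas, hS₀cost⟩ := hOPT.1
  have hOPT0 : 0 ≤ OPT := hS₀cost ▸ Finset.sum_nonneg fun h _ => hc h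
  refine ⟨?_, ?_, ?_, ?_⟩
  · intro t ht
    refine ⟨(p t).1, ?_, (p t).2, ?_, hpvalid t ht⟩ <;>
      exact Finset.mem_biUnion.2 ⟨t, ht, by simp⟩
  · calc cost c (τ.biUnion fun t => {(p t).1, (p t).2})
        ≤ ∑ t ∈ τ, cost c {(p t).1, (p t).2} := cost_biUnion_le c hc τ _
      _ = ∑ t ∈ τ, m t := Finset.sum_congr rfl fun t ht => hpmin t ht
  · have key : ∀ t ∈ τ, m t ≤ OPT := by
      intro t ht
      obtain ⟨h, hh, h', hh', htour⟩ := hS₀feas t ht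
      have h1 : m t ≤ cost c {h, h'} := (hm t ht).2 ⟨h, h', htour, rfl⟩
      have h2 : cost c {h, h'} ≤ cost c S₀ := by
        apply Finset.sum_le_sum_of_subset_of_nonneg
        · intro x hx
          simp only [Finset.mem_insert, Finset.mem_singleton] at hx
          rcases hx with rfl | rfl <;> assumption
        · exact fun x _ _ => hc x
      linarith [hS₀cost ▸ h2]
    calc ∑ t ∈ τ, m t ≤ ∑ _t ∈ τ, OPT := Finset.sum_le_sum key
      _ = (τ.card : ℝ) * OPT := by rw [Finset.sum_const, nsmul_eq_mul]
  · have hcard : τ.card ≤ Fintype.card B ^ 2 := by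
      calc τ.card ≤ Fintype.card (B × B) := Finset.card_le_univ τ
        _ = Fintype.card B ^ 2 := by rw [Fintype.card_prod, sq]
    apply mul_le_mul_of_nonneg_right _ hOPT0
    exact_mod_cast hcard
end

section
/- Let I₂ be an MA 2 instance with branches B, hubs H, costs c, branch–hub edges E_BH, hub–hub edges E_HH, and tasks τ. Define an MA 1 instance I₁ on the same B, H, c, τ with discount factor α = 1/2, threshold φ = 2.75, and distance function d given by d(x,x) = 0, d(x,y) = 1 if the unordered pair {x,y} is an edge of I₂ (i.e., a branch–hub edge in E_BH or a hub–hub edge in E_HH), and d(x,y) = 2 otherwise. Then a set S ⊆ H is MA 1-feasible for I₁ if and only if it is MA 2-feasible for I₂; consequently the minimum cost of an MA 1-feasible set for I₁ equals the minimum cost of an MA 2-feasible set for I₂. -/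
/-- A hub set `S` is MA 2-feasible if every task can be routed along existing edges
through one or two open hubs. -/
def MA2Feasible {B H : Type*} (EBH : Set (B × H)) (EHH : Set (H × H))
    (τ : Finset (B × B)) (S : Finset H) : Prop :=
  ∀ t ∈ τ, ∃ h ∈ S, ∃ h' ∈ S, (t.1, h) ∈ EBH ∧ (h, h') ∈ EHH ∧ (t.2, h') ∈ EBH

open scoped Classical in
/-- The distance function of the constructed MA 1 instance: 0 on the diagonal, 1 on
edges of the MA 2 instance, and 2 otherwise. -/
noncomputable def redDist {B H : Type*} (EBH : Set (B × H)) (EHH : Set (H × H)) :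
    (B ⊕ H) → (B ⊕ H) → ℝ
  | Sum.inl b, Sum.inl b' => if b = b' then 0 else 2
  | Sum.inl b, Sum.inr h => if (b, h) ∈ EBH then 1 else 2
  | Sum.inr h, Sum.inl b => if (b, h) ∈ EBH then 1 else 2
  | Sum.inr h, Sum.inr h' => if h = h' then 0 else if (h, h') ∈ EHH then 1 else 2

theorem stmt6 {B H : Type*} [Fintype B] [Fintype H]
    (c : H → ℝ) (hc : ∀ h, 0 ≤ c h)
    (EBH : Set (B × H)) (EHH : Set (H × H))
    (hEHHsym : ∀ h h', (h, h') ∈ EHH → (h', h) ∈ EHH)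
    (hEHHloop : ∀ h, (h, h) ∈ EHH)
    (τ : Finset (B × B)) :
    (∀ S : Finset H,
      MA1Feasible (redDist EBH EHH) (1 / 2) 2.75 τ S ↔ MA2Feasible EBH EHH τ S) ∧
    (∀ m : ℝ,
      IsLeast {x : ℝ | ∃ S : Finset H,
        MA1Feasible (redDist EBH EHH) (1 / 2) 2.75 τ S ∧ x = cost c S} m ↔
      IsLeast {x : ℝ | ∃ S : Finset H, MA2Feasible EBH EHH τ S ∧ x = cost c S} m) := by

  have key : ∀ S : Finset H,
      MA1Feasible (redDist EBH EHH) (1 / 2) 2.75 τ S ↔ MA2Feasible EBH EHH τ S := by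
    intro S
    constructor
    · intro hfeas t ht
      obtain ⟨h, hS, h', h'S, hle⟩ := hfeas t ht
      refine ⟨h, hS, h', h'S, ?_, ?_, ?_⟩ <;>
      · by_contra hne
        simp only [tourLen, redDist] at hle
        split_ifs at hle <;> norm_num at hle <;> simp_all <;> linarith
    · intro hfeas t ht
      obtain ⟨h, hS, h', h'S, e1, e2, e3⟩ := hfeas t ht
      refine ⟨h, hS, h', h'S, ?_⟩
      simp only [tourLen, redDist, if_pos e1, if_pos e3, if_pos e2]
      split_ifs <;> norm_num
  refine ⟨key, fun m => ?_⟩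
  have : {x : ℝ | ∃ S : Finset H,
      MA1Feasible (redDist EBH EHH) (1 / 2) 2.75 τ S ∧ x = cost c S} =
      {x : ℝ | ∃ S : Finset H, MA2Feasible EBH EHH τ S ∧ x = cost c S} := by
    ext x; simp only [Set.mem_setOf_eq, key]
  rw [this]
end

section
/- Let I₂ be an SA 2 instance with branches B, hubs H, costs c, branch–hub edges E_BH, hub–hub edges E_HH, and tasks τ in which every branch occurs in some task. Define an SA 1 instance I₁ on the same B, H, c, τ with discount factor α = 1/2, threshold φ = 2.75, and distance function d given by d(x,x) = 0, d(x,y) = 1 if the unordered pair {x,y} is an edge of I₂, and d(x,y) = 2 otherwise. Then an allocation a : B → H is SA 1-feasible for I₁ if and only if it is SA 2-feasible for I₂; consequently the minimum cost over hub sets admitting a feasible allocation is the same for I₁ and I₂. -/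
/-- An allocation `a` is SA 1-feasible if every task's tour through the allocated hubs
has length at most `φ`. -/
def SA1Feasible {B H : Type*} (d : (B ⊕ H) → (B ⊕ H) → ℝ) (α φ : ℝ)
    (τ : Finset (B × B)) (a : B → H) : Prop :=
  ∀ t ∈ τ, tourLen d α t.1 (a t.1) (a t.2) t.2 ≤ φ

/-- An allocation `a` is SA 2-feasible if every branch is connected to its hub by an
existing edge and every task's hub-to-hub connection is an existing edge. -/
def SA2Feasible {B H : Type*} (EBH : Set (B × H)) (EHH : Set (H × H))
    (τ : Finset (B × B)) (a : B → H) : Prop :=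
  (∀ b, (b, a b) ∈ EBH) ∧ ∀ t ∈ τ, (a t.1, a t.2) ∈ EHH

open Classical in
lemma stmt7_aux (P Q R S : Prop)
    (h : (if P then (1:ℝ) else 2) + (1/2)*(if Q then (0:ℝ) else if R then 1 else 2)
      + (if S then (1:ℝ) else 2) ≤ 2.75) : P ∧ S ∧ (Q ∨ R) := by
  by_contra hcon
  push_neg at hcon
  split_ifs at h <;> norm_num at h <;> tauto

theorem stmt7 {B H : Type*} [Fintype B] [Fintype H] [DecidableEq H]
    (c : H → ℝ) (hc : ∀ h, 0 ≤ c h)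
    (EBH : Set (B × H)) (EHH : Set (H × H))
    (hEHHsym : ∀ h h', (h, h') ∈ EHH → (h', h) ∈ EHH)
    (hEHHloop : ∀ h, (h, h) ∈ EHH)
    (τ : Finset (B × B))
    (hocc : ∀ b : B, ∃ t ∈ τ, t.1 = b ∨ t.2 = b) :
    (∀ a : B → H,
      SA1Feasible (redDist EBH EHH) (1 / 2) 2.75 τ a ↔ SA2Feasible EBH EHH τ a) ∧
    (∀ m : ℝ,
      IsLeast {x : ℝ | ∃ a : B → H,
        SA1Feasible (redDist EBH EHH) (1 / 2) 2.75 τ a ∧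
          x = cost c (Finset.univ.image a)} m ↔
      IsLeast {x : ℝ | ∃ a : B → H,
        SA2Feasible EBH EHH τ a ∧ x = cost c (Finset.univ.image a)} m) := by
  have key : ∀ a : B → H,
      SA1Feasible (redDist EBH EHH) (1 / 2) 2.75 τ a ↔ SA2Feasible EBH EHH τ a := by
    intro a
    constructor
    · intro h1
      have main : ∀ t ∈ τ, (t.1, a t.1) ∈ EBH ∧ (t.2, a t.2) ∈ EBH ∧
          (a t.1 = a t.2 ∨ (a t.1, a t.2) ∈ EHH) := by
        intro t ht
        have := h1 t ht
        simp only [tourLen, redDist] at this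
        exact stmt7_aux _ _ _ _ this
      constructor
      · intro b
        obtain ⟨t, ht, hb⟩ := hocc b
        rcases hb with hb | hb
        · exact hb ▸ (main t ht).1
        · exact hb ▸ (main t ht).2.1
      · intro t ht
        rcases (main t ht).2.2 with h | h
        · rw [h]; exact hEHHloop _
        · exact h
    · rintro ⟨h2a, h2b⟩ t ht
      simp only [tourLen, redDist]
      have e1 := h2a t.1
      have e2 := h2a t.2
      have e3 := h2b t ht
      rw [if_pos e1, if_pos e2, if_pos e3]
      split_ifs <;> norm_num
  refine ⟨key, fun m => ?_⟩
  have hset : {x : ℝ | ∃ a : B → H,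
      SA1Feasible (redDist EBH EHH) (1 / 2) 2.75 τ a ∧
        x = cost c (Finset.univ.image a)} =
      {x : ℝ | ∃ a : B → H,
        SA2Feasible EBH EHH τ a ∧ x = cost c (Finset.univ.image a)} := by
    ext x
    simp only [Set.mem_setOf_eq]
    exact exists_congr fun a => and_congr_left' (key a)
  rw [hset]
end

section
/- Let I₃ be a variant-3 instance with branches B (nonempty), hubs H, costs c, and edges E, and fix b₀ ∈ B. Define an MA 2 instance I₂ on the same B, H, c with branch–hub edges E_BH = E, hub–hub edges E_HH = H × H (hubs fully connected, corresponding to discount factor α = 0), and task set τ = {(b, b₀) : b ∈ B}. Then a set S ⊆ H is MA 2-feasible for I₂ if and only if S covers B in I₃; consequently the minimum cost of an MA 2-feasible set for I₂ equals the minimum cost of a covering set for I₃. -/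
/-- A hub set `S` covers `B` (variant 3) if every branch is connected to some open hub. -/
def Covers {B H : Type*} (E : Set (B × H)) (S : Finset H) : Prop :=
  ∀ b : B, ∃ h ∈ S, (b, h) ∈ E

theorem stmt9 {B H : Type*} [Fintype B] [Fintype H] [DecidableEq B]
    (c : H → ℝ) (hc : ∀ h, 0 ≤ c h)
    (E : Set (B × H)) (b₀ : B) :
    (∀ S : Finset H,
      MA2Feasible E (Set.univ : Set (H × H))
        (Finset.univ.image fun b : B => (b, b₀)) S ↔ Covers E S) ∧
    (∀ m : ℝ,
      IsLeast {x : ℝ | ∃ S : Finset H,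
        MA2Feasible E (Set.univ : Set (H × H))
          (Finset.univ.image fun b : B => (b, b₀)) S ∧ x = cost c S} m ↔
      IsLeast {x : ℝ | ∃ S : Finset H, Covers E S ∧ x = cost c S} m) := by
  have key : ∀ S : Finset H,
      MA2Feasible E (Set.univ : Set (H × H))
        (Finset.univ.image fun b : B => (b, b₀)) S ↔ Covers E S := by
    intro S
    constructor
    · intro hF b
      obtain ⟨h, hS, h', hS', hbh, _, _⟩ := hF (b, b₀)
        (Finset.mem_image.mpr ⟨b, Finset.mem_univ b, rfl⟩)
      exact ⟨h, hS, hbh⟩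
    · intro hC t ht
      obtain ⟨b, -, rfl⟩ := Finset.mem_image.mp ht
      obtain ⟨h, hS, hbh⟩ := hC b
      obtain ⟨h', hS', hb0⟩ := hC b₀
      exact ⟨h, hS, h', hS', hbh, Set.mem_univ _, hb0⟩
  refine ⟨key, fun m => ?_⟩
  have : {x : ℝ | ∃ S : Finset H,
      MA2Feasible E (Set.univ : Set (H × H))
        (Finset.univ.image fun b : B => (b, b₀)) S ∧ x = cost c S}
      = {x : ℝ | ∃ S : Finset H, Covers E S ∧ x = cost c S} := by
    ext x; simp only [Set.mem_setOf_eq, key]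
  rw [this]
end

section
/- Let I₃ be a variant-3 instance with branches B (nonempty), hubs H, costs c, and edges E, and fix b₀ ∈ B. Define an SA 2 instance I₂ on the same B, H, c with branch–hub edges E_BH = E, hub–hub edges E_HH = H × H, and task set τ = {(b, b₀) : b ∈ B}. Then for every S ⊆ H, there exists an SA 2-feasible allocation a : B → H with a(b) ∈ S for all b ∈ B if and only if S covers B in I₃; consequently the single-allocation optimum of I₂ equals the minimum cost of a covering set for I₃. -/
theorem stmt10 {B H : Type*} [Fintype B] [Fintype H] [DecidableEq B] [DecidableEq H]
    (c : H → ℝ) (hc : ∀ h, 0 ≤ c h)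
    (E : Set (B × H)) (b₀ : B) :
    (∀ S : Finset H,
      (∃ a : B → H,
        SA2Feasible E (Set.univ : Set (H × H))
          (Finset.univ.image fun b : B => (b, b₀)) a ∧ ∀ b, a b ∈ S) ↔ Covers E S) ∧
    (∀ m : ℝ,
      IsLeast {x : ℝ | ∃ a : B → H,
        SA2Feasible E (Set.univ : Set (H × H))
          (Finset.univ.image fun b : B => (b, b₀)) a ∧
            x = cost c (Finset.univ.image a)} m ↔
      IsLeast {x : ℝ | ∃ S : Finset H, Covers E S ∧ x = cost c S} m) := by
  classical
  have key : ∀ S : Finset H,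
      (∃ a : B → H,
        SA2Feasible E (Set.univ : Set (H × H))
          (Finset.univ.image fun b : B => (b, b₀)) a ∧ ∀ b, a b ∈ S) ↔ Covers E S := by
    intro S
    constructor
    · rintro ⟨a, ⟨hBH, _⟩, hS⟩ b
      exact ⟨a b, hS b, hBH b⟩
    · intro hcov
      choose a haS haE using hcov
      exact ⟨a, ⟨haE, fun t _ => Set.mem_univ _⟩, haS⟩
  set L := {x : ℝ | ∃ a : B → H,
        SA2Feasible E (Set.univ : Set (H × H))
          (Finset.univ.image fun b : B => (b, b₀)) a ∧
            x = cost c (Finset.univ.image a)} with hL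
  set R := {x : ℝ | ∃ S : Finset H, Covers E S ∧ x = cost c S} with hR
  have hLR : L ⊆ R := by
    rintro x ⟨a, ⟨hBH, _⟩, rfl⟩
    refine ⟨Finset.univ.image a, fun b => ⟨a b, Finset.mem_image_of_mem a (Finset.mem_univ b), hBH b⟩, rfl⟩
  have hdom : ∀ x ∈ R, ∃ y ∈ L, y ≤ x := by
    rintro x ⟨S, hcov, rfl⟩
    obtain ⟨a, hfeas, haS⟩ := (key S).mpr hcov
    refine ⟨cost c (Finset.univ.image a), ⟨a, hfeas, rfl⟩, ?_⟩
    apply Finset.sum_le_sum_of_subset_of_nonneg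
    · intro h hh
      obtain ⟨b, _, rfl⟩ := Finset.mem_image.mp hh
      exact haS b
    · intro h _ _; exact hc h
  refine ⟨key, fun m => ⟨?_, ?_⟩⟩
  · rintro ⟨hmL, hlb⟩
    refine ⟨hLR hmL, fun x hx => ?_⟩
    obtain ⟨y, hyL, hyx⟩ := hdom x hx
    exact (hlb hyL).trans hyx
  · rintro ⟨hmR, hlb⟩
    obtain ⟨y, hyL, hyx⟩ := hdom m hmR
    have : m ≤ y := hlb (hLR hyL)
    have hym : y = m := le_antisymm hyx this
    exact ⟨hym ▸ hyL, fun x hx => hlb (hLR hx)⟩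
end
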